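/- arXiv:1410.4397 — 2 statements merged into one kernel-verified Lean document; each statement's English description precedes it below -/
import Mathlib

section
/- If ω, ε ∈ [0,1] satisfy ε/8 ≥ 1 - √(ω(1-ε)) - √((1-ω)ε), then ω ≤ 1 - ε/4. -/
theorem bernoulli_fidelity_bound (ω ε : ℝ)
    (hω : ω ∈ Set.Icc (0 : ℝ) 1) (hε : ε ∈ Set.Icc (0 : ℝ) 1)
    (h : 1 - Real.sqrt (ω * (1 - ε)) - Real.sqrt ((1 - ω) * ε) ≤ ε / 8) :
    ω ≤ 1 - ε / 4 := by
  obtain ⟨hω0, hω1⟩ := hω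
  obtain ⟨hε0, hε1⟩ := hε
  have h1ω : (0:ℝ) ≤ 1 - ω := by linarith
  have h1ε : (0:ℝ) ≤ 1 - ε := by linarith
  set u := Real.sqrt ω with hu
  set v := Real.sqrt (1 - ω) with hv
  set s := Real.sqrt (1 - ε) with hs
  set t := Real.sqrt ε with ht
  have hu2 : u ^ 2 = ω := Real.sq_sqrt hω0
  have hv2 : v ^ 2 = 1 - ω := Real.sq_sqrt h1ω
  have hs2 : s ^ 2 = 1 - ε := Real.sq_sqrt h1ε
  have ht2 : t ^ 2 = ε := Real.sq_sqrt hε0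
  have hus : Real.sqrt (ω * (1 - ε)) = u * s := Real.sqrt_mul hω0 _
  have hvt : Real.sqrt ((1 - ω) * ε) = v * t := Real.sqrt_mul h1ω _
  rw [hus, hvt] at h
  have hvn : 0 ≤ v := Real.sqrt_nonneg _
  have htn : 0 ≤ t := Real.sqrt_nonneg _
  have hsq : (v - t) ^ 2 ≤ (t / 2) ^ 2 := by
    nlinarith [sq_nonneg (u - s)]
  have hge : t / 2 ≤ v := by nlinarith [hsq, hvn, htn]
  nlinarith [hge, htn, hvn]
end

section
/- Let ρ, σ be density matrices and E = {E₁, …, E_m} a POVM (positive semidefinite operators summing to the identity). Set pᵢ = Tr(ρEᵢ) and qᵢ = Tr(σEᵢ). Then F(ρ,σ) ≤ Σᵢ √(pᵢ qᵢ). -/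
open scoped Kronecker ComplexOrder Classical

/-- Square root of a positive semidefinite matrix (junk value `0` otherwise). -/
noncomputable def msqrt {n : Type*} [Fintype n] [DecidableEq n]
    (M : Matrix n n ℂ) : Matrix n n ℂ :=
  if h : M.PosSemidef then
    (h.1.eigenvectorUnitary : Matrix n n ℂ) *
      Matrix.diagonal (((↑) : ℝ → ℂ) ∘ Real.sqrt ∘ h.1.eigenvalues) *
      (star h.1.eigenvectorUnitary : Matrix n n ℂ)
  else 0

/-- Quantum fidelity `F(ρ,σ) = Tr √(√ρ σ √ρ)`. -/
noncomputable def fidelity {n : Type*} [Fintype n] [DecidableEq n]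
    (ρ σ : Matrix n n ℂ) : ℝ :=
  ((msqrt (msqrt ρ * σ * msqrt ρ)).trace).re

/-- A density matrix: positive semidefinite with unit trace. -/
def IsDensity {n : Type*} [Fintype n] [DecidableEq n] (ρ : Matrix n n ℂ) : Prop :=
  ρ.PosSemidef ∧ ρ.trace = 1

/-- Partial trace over the second tensor factor. -/
noncomputable def ptraceB {A B : Type*} [Fintype A] [Fintype B]
    (M : Matrix (A × B) (A × B) ℂ) : Matrix A A ℂ :=
  Matrix.of fun a a' => ∑ b, M (a, b) (a', b)

/-- Partial trace over the first tensor factor. -/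
noncomputable def ptraceA {A B : Type*} [Fintype A] [Fintype B]
    (M : Matrix (A × B) (A × B) ℂ) : Matrix B B ℂ :=
  Matrix.of fun b b' => ∑ a, M (a, b) (a, b')

/-!
Write `R = √ρ`, `S = √σ` and `Q = √(R σ R)`, so that `(S R)ᴴ (S R) = Q²` and `F(ρ,σ) = Tr Q`.
Polar decomposition of `S R` gives a contraction `W` with `W S R = Q`, hence
`F(ρ,σ) = ∑ᵢ Tr (W S Eᵢ R)`. Splitting `Eᵢ = √Eᵢ √Eᵢ`, Cauchy–Schwarz for the Hilbert–Schmidt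
inner product bounds the `i`-th term by `√(Tr (ρ Eᵢ) · Tr (W S Eᵢ S Wᴴ))`, and
`Tr (W S Eᵢ S Wᴴ) ≤ Tr (S Eᵢ S) = Tr (σ Eᵢ)` because `W` is a contraction.
-/

open scoped MatrixOrder

namespace Matrix

lemma re_trace_mul_le {m n : Type*} [Fintype m] [Fintype n] (A : Matrix m n ℂ)
    (B : Matrix n m ℂ) : (A * B).trace.re ≤ √((A * Aᴴ).trace.re * (Bᴴ * B).trace.re) := by
  have key (X Y : Matrix n m ℂ) :
      (Xᴴ * Y).trace = inner ℂ (WithLp.toLp 2 X.vec) (WithLp.toLp 2 Y.vec) := by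
    rw [EuclideanSpace.inner_toLp_toLp, dotProduct_comm, star_vec_dotProduct_vec]
  have hnorm (X : Matrix n m ℂ) : (Xᴴ * X).trace.re = ‖WithLp.toLp 2 X.vec‖ ^ 2 := by
    rw [key, norm_sq_eq_re_inner (𝕜 := ℂ), RCLike.re_to_complex]
  rw [← conjTranspose_conjTranspose A, conjTranspose_conjTranspose Aᴴ, hnorm, hnorm, ← mul_pow,
    Real.sqrt_sq (by positivity), key]
  exact re_inner_le_norm (𝕜 := ℂ) _ _

variable {n : Type*} [Fintype n] [DecidableEq n]

lemma PosSemidef.msqrt_eq_sqrt {M : Matrix n n ℂ} (hM : M.PosSemidef) :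
    msqrt M = CFC.sqrt M := by
  rw [CFC.sqrt_eq_real_sqrt M hM.nonneg, cfcₙ_eq_cfc, hM.1.cfc_eq, IsHermitian.cfc,
    Unitary.conjStarAlgAut_apply, msqrt, dif_pos hM]
  rfl

lemma PosSemidef.posSemidef_msqrt {M : Matrix n n ℂ} (hM : M.PosSemidef) :
    (msqrt M).PosSemidef := by
  rw [hM.msqrt_eq_sqrt]
  exact nonneg_iff_posSemidef.mp (CFC.sqrt_nonneg M)

lemma PosSemidef.msqrt_mul_msqrt {M : Matrix n n ℂ} (hM : M.PosSemidef) :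
    msqrt M * msqrt M = M := by
  rw [hM.msqrt_eq_sqrt]
  exact CFC.sqrt_mul_sqrt_self M hM.nonneg

lemma PosSemidef.trace_mul_mul_conjTranspose_le {m : Type*} [Fintype m] {W : Matrix m n ℂ}
    {D : Matrix n n ℂ} (hD : D.PosSemidef) (hW : (1 - Wᴴ * W).PosSemidef) :
    (W * D * Wᴴ).trace ≤ D.trace := by
  set S := msqrt D
  have hS : Sᴴ = S := hD.posSemidef_msqrt.1
  rw [← sub_nonneg, ← hD.msqrt_mul_msqrt]
  calc 0 ≤ (S * (1 - Wᴴ * W) * Sᴴ).trace := (hW.mul_mul_conjTranspose_same S).trace_nonneg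
    _ = (S * S).trace - (W * (S * S) * Wᴴ).trace := by
      rw [hS, mul_sub, sub_mul, trace_sub, mul_one, trace_mul_cycle, trace_mul_cycle W,
        trace_mul_comm (Wᴴ * W)]

lemma cfc_mul_cfc {A : Matrix n n ℂ} (f g : ℝ → ℝ) :
    cfc f A * cfc g A = cfc (fun x => f x * g x) A :=
  (cfc_mul f g A (finite_real_spectrum.continuousOn _) (finite_real_spectrum.continuousOn _)).symm

/-- The witness is `W = Q⁺ Mᴴ` with `Q⁺ = cfc (·⁻¹) Q` the Moore–Penrose inverse: `Wᴴ` is the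
partial isometry of the polar decomposition of `M`, so `Wᴴ W` is a projection. -/
lemma IsHermitian.exists_contraction_mul_eq_of_conjTranspose_mul_self_eq {m : Type*}
    [Fintype m] [DecidableEq m] {M : Matrix m n ℂ} {Q : Matrix n n ℂ} (hQ : Q.IsHermitian)
    (hMQ : Mᴴ * M = Q * Q) : ∃ W : Matrix n m ℂ, W * M = Q ∧ (1 - Wᴴ * W).PosSemidef := by
  have hQQ : Q * Q = cfc (fun x : ℝ => x * x) Q := by
    rw [← cfc_mul_cfc, cfc_id' ℝ Q hQ.isSelfAdjoint]
  set P := cfc (·⁻¹ : ℝ → ℝ) Q with hP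
  have hPQQ : P * (Q * Q) = Q := by
    rw [hQQ, hP, cfc_mul_cfc]
    conv_rhs => rw [← cfc_id' ℝ Q hQ.isSelfAdjoint]
    congr 1; funext x
    by_cases hx : x = 0 <;> field_simp [hx]
  have hPPQQPP : P * P * (Q * Q) * (P * P) = P * P := by
    rw [hQQ, hP]
    simp only [cfc_mul_cfc]
    congr 1; funext x
    by_cases hx : x = 0 <;> field_simp [hx]
  refine ⟨P * Mᴴ, by rw [Matrix.mul_assoc, hMQ, hPQQ], nonneg_iff_posSemidef.mp ?_⟩
  refine IsStarProjection.one_sub_nonneg ⟨?_, isHermitian_conjTranspose_mul_self _⟩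
  have hPH : Pᴴ = P := (cfc_predicate (·⁻¹ : ℝ → ℝ) Q).star_eq
  calc (P * Mᴴ)ᴴ * (P * Mᴴ) * ((P * Mᴴ)ᴴ * (P * Mᴴ))
      = M * (P * P * (Mᴴ * M) * (P * P)) * Mᴴ := by
        simp only [conjTranspose_mul, conjTranspose_conjTranspose, hPH, Matrix.mul_assoc]
    _ = (P * Mᴴ)ᴴ * (P * Mᴴ) := by
        rw [hMQ, hPPQQPP]
        simp only [conjTranspose_mul, conjTranspose_conjTranspose, hPH, Matrix.mul_assoc]

lemma PosSemidef.re_trace_mul_msqrt_le {ρ σ E W : Matrix n n ℂ} (hρ : ρ.PosSemidef)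
    (hσ : σ.PosSemidef) (hE : E.PosSemidef) (hW : (1 - Wᴴ * W).PosSemidef) :
    (W * (msqrt σ * E * msqrt ρ)).trace.re ≤ √((ρ * E).trace.re * (σ * E).trace.re) := by
  set R := msqrt ρ
  set S := msqrt σ
  set G := msqrt E
  have hR : Rᴴ = R := hρ.posSemidef_msqrt.1
  have hS : Sᴴ = S := hσ.posSemidef_msqrt.1
  have hG : Gᴴ = G := hE.posSemidef_msqrt.1
  have hGG : G * G = E := hE.msqrt_mul_msqrt
  have hρE : ((G * R)ᴴ * (G * R)).trace = (ρ * E).trace := by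
    rw [conjTranspose_mul, hG, hR, Matrix.mul_assoc, ← Matrix.mul_assoc G, hGG,
      ← Matrix.mul_assoc, trace_mul_comm, ← Matrix.mul_assoc, hρ.msqrt_mul_msqrt]
  have hρE_nonneg : 0 ≤ (ρ * E).trace.re :=
    hρE ▸ (Complex.nonneg_iff.mp (posSemidef_conjTranspose_mul_self (G * R)).trace_nonneg).1
  have hσE : (W * S * G * (W * S * G)ᴴ).trace.re ≤ (σ * E).trace.re := by
    have hD : (S * E * S).PosSemidef := by simpa only [hS] using hE.mul_mul_conjTranspose_same S
    have := (Complex.le_def.mp (hD.trace_mul_mul_conjTranspose_le hW)).1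
    rw [trace_mul_cycle S E S, hσ.msqrt_mul_msqrt] at this
    convert this using 3
    rw [← hGG]
    simp only [conjTranspose_mul, hS, hG, Matrix.mul_assoc]
  calc (W * (S * E * R)).trace.re = (W * S * G * (G * R)).trace.re := by
        rw [← hGG]; simp only [Matrix.mul_assoc]
    _ ≤ √((W * S * G * (W * S * G)ᴴ).trace.re * ((G * R)ᴴ * (G * R)).trace.re) :=
        re_trace_mul_le _ _
    _ ≤ √((ρ * E).trace.re * (σ * E).trace.re) := by
        rw [mul_comm, hρE]
        exact Real.sqrt_le_sqrt (mul_le_mul_of_nonneg_left hσE hρE_nonneg)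

end Matrix

open Matrix

theorem fidelity_le_povm {n : Type*} [Fintype n] [DecidableEq n] (m : ℕ)
    (ρ σ : Matrix n n ℂ) (hρ : IsDensity ρ) (hσ : IsDensity σ)
    (E : Fin m → Matrix n n ℂ) (hE : ∀ i, (E i).PosSemidef) (hEsum : ∑ i, E i = 1) :
    fidelity ρ σ ≤ ∑ i, Real.sqrt (((ρ * E i).trace).re * ((σ * E i).trace).re) := by
  set R := msqrt ρ
  set S := msqrt σ
  have hR : Rᴴ = R := hρ.1.posSemidef_msqrt.1
  have hS : Sᴴ = S := hσ.1.posSemidef_msqrt.1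
  have hRσR : (R * σ * R).PosSemidef := by
    simpa only [hR] using hσ.1.mul_mul_conjTranspose_same R
  obtain ⟨W, hWM, hW⟩ :=
    hRσR.posSemidef_msqrt.1.exists_contraction_mul_eq_of_conjTranspose_mul_self_eq (M := S * R)
      (by rw [hRσR.msqrt_mul_msqrt, conjTranspose_mul, hR, hS, Matrix.mul_assoc,
        ← Matrix.mul_assoc S, hσ.1.msqrt_mul_msqrt, Matrix.mul_assoc])
  have hsum : W * (S * R) = ∑ i, W * (S * E i * R) := by
    rw [← Finset.mul_sum, ← Finset.sum_mul, ← Finset.mul_sum, hEsum, mul_one]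
  calc fidelity ρ σ = (W * (S * R)).trace.re := by rw [hWM]; rfl
    _ = ∑ i, (W * (S * E i * R)).trace.re := by rw [hsum, trace_sum, Complex.re_sum]
    _ ≤ _ := Finset.sum_le_sum fun i _ => hρ.1.re_trace_mul_msqrt_le hσ.1 (hE i) hW
end
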